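/- arXiv:0811.2340 — 2 statements merged into one kernel-verified Lean document; each statement's English description precedes it below -/
import Mathlib

section
/- Under axioms (Ax0), (Ax2), (Ax3), the restriction T_max of T to the subcategory Max(C) of maximal objects is conservative: a morphism f in Max(C) is an isomorphism if and only if T_max(f) is an isomorphism. Moreover, if T is faithful (resp. full, resp. essentially surjective), then so is T_max. -/
/-!
Maximal objects are terminal in their strict fibres, so a morphism between maximal objects
lying over an identity is an isomorphism. By (Ax0), a morphism of maximal objects whose image
is an isomorphism factors as an isomorphism followed by such a morphism, which gives
conservativity. Faithfulness and fullness pass to the restriction along the fully faithful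
inclusion, and `Max X` is maximal and lies over `T X`, which gives essential surjectivity.
-/

open CategoryTheory Limits

universe v₁ v₂ u₁ u₂

variable {C : Type u₁} [Category.{v₁} C] {A : Type u₂} [Category.{v₂} A]

/-- Axiom (Ax0): every isomorphism `f : T(C) ≅ A'` in `A` lifts to an isomorphism
`g : C ≅ C'` in `C` with `T(g) = f` (and in particular `T(C') = A'`). -/
def Ax0 (T : C ⥤ A) : Prop :=
  ∀ (X : C) (a' : A) (f : T.obj X ≅ a'), ∃ (X' : C) (h : T.obj X' = a') (g : X ≅ X'),
    T.map g.hom = f.hom ≫ eqToHom h.symm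

/-- The data of the functor `Max` of the pylonet formalism: a functor `F : C ⥤ C` together
with a natural transformation `ι : 𝟭 C ⟶ F` such that for every `X`, `F.obj X` lies in the
strict fiber of `T` over `T.obj X`, `T(ι_X) = id`, and `F.obj X` is a terminal object of that
strict fiber (axiom (Ax3)). -/
structure MaxData (T : C ⥤ A) where
  F : C ⥤ C
  ι : 𝟭 C ⟶ F
  fiber_eq : ∀ X : C, T.obj (F.obj X) = T.obj X
  ι_eq : ∀ X : C, T.map (ι.app X) = eqToHom (fiber_eq X).symm
  terminal : ∀ (X Y : C) (h : T.obj Y = T.obj X),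
    ∃! g : Y ⟶ F.obj X, T.map g = eqToHom (h.trans (fiber_eq X).symm)

/-- An object is maximal when the canonical map `ι_X : X ⟶ Max X` is an isomorphism. -/
def Pmax {T : C ⥤ A} (M : MaxData T) : C → Prop := fun X => IsIso (M.ι.app X)

namespace MaxData

variable {T : C ⥤ A} (M : MaxData T)

lemma hom_ext_to_F {X Y : C} {h : T.obj Y = T.obj (M.F.obj X)} {g₁ g₂ : Y ⟶ M.F.obj X}
    (h₁ : T.map g₁ = eqToHom h) (h₂ : T.map g₂ = eqToHom h) : g₁ = g₂ :=
  (M.terminal X Y (h.trans (M.fiber_eq X))).unique h₁ h₂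

lemma exists_hom_to_F (X : C) {Y : C} (h : T.obj Y = T.obj (M.F.obj X)) :
    ∃ g : Y ⟶ M.F.obj X, T.map g = eqToHom h :=
  (M.terminal X Y (h.trans (M.fiber_eq X))).exists

instance : ObjectProperty.IsClosedUnderIsomorphisms (Pmax M) where
  of_iso e hX := (NatTrans.isIso_app_iff_of_iso M.ι e).mp hX

variable {M}

lemma hom_ext_of_pmax {X Y : C} (hX : Pmax M X) {h : T.obj Y = T.obj X} {g₁ g₂ : Y ⟶ X}
    (h₁ : T.map g₁ = eqToHom h) (h₂ : T.map g₂ = eqToHom h) : g₁ = g₂ := by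
  have : IsIso (M.ι.app X) := hX
  refine (cancel_mono (M.ι.app X)).mp (M.hom_ext_to_F (h := h.trans (M.fiber_eq X).symm) ?_ ?_)
    <;> simp [h₁, h₂, M.ι_eq]

lemma exists_hom_of_pmax {X Y : C} (hX : Pmax M X) (h : T.obj Y = T.obj X) :
    ∃ g : Y ⟶ X, T.map g = eqToHom h := by
  have : IsIso (M.ι.app X) := hX
  obtain ⟨g, hg⟩ := M.exists_hom_to_F X (h.trans (M.fiber_eq X).symm)
  refine ⟨g ≫ inv (M.ι.app X), ?_⟩
  simp [hg, M.ι_eq]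

lemma isIso_of_map_eq_eqToHom {X Y : C} (hX : Pmax M X) (hY : Pmax M Y)
    {h : T.obj X = T.obj Y} {φ : X ⟶ Y} (hφ : T.map φ = eqToHom h) : IsIso φ := by
  obtain ⟨ψ, hψ⟩ := exists_hom_of_pmax hX h.symm
  refine ⟨ψ, hom_ext_of_pmax hX (h := rfl) ?_ (T.map_id X),
    hom_ext_of_pmax hY (h := rfl) ?_ (T.map_id Y)⟩ <;> simp [hφ, hψ]

lemma isIso_of_isIso_map (hAx0 : Ax0 T) {X Y : C} (hX : Pmax M X) (hY : Pmax M Y)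
    (f : X ⟶ Y) [IsIso (T.map f)] : IsIso f := by
  obtain ⟨X', h, g, hg⟩ := hAx0 X (T.obj Y) (asIso (T.map f))
  have hX' : Pmax M X' := ObjectProperty.prop_of_iso _ g hX
  have hg_inv : T.map g.inv = eqToHom h ≫ inv (T.map f) := by
    rw [← cancel_epi (T.map g.hom), ← T.map_comp, g.hom_inv_id, T.map_id, hg]
    simp
  have : IsIso (g.inv ≫ f) := isIso_of_map_eq_eqToHom hX' hY (h := h) (by simp [hg_inv])
  simpa using (inferInstance : IsIso (g.hom ≫ g.inv ≫ f))

lemma pmax_F_obj (X : C) : Pmax M (M.F.obj X) := by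
  obtain ⟨w, hw⟩ := M.exists_hom_to_F X (M.fiber_eq (M.F.obj X))
  refine ⟨w, M.hom_ext_to_F (h := rfl) ?_ (T.map_id _),
    M.hom_ext_to_F (h := rfl) ?_ (T.map_id _)⟩ <;> simp [hw, M.ι_eq]

end MaxData

open MaxData in
theorem tmax_conservative_and_inherits_general (T : C ⥤ A) (hAx0 : Ax0 T)
    (M : MaxData T) :
    (∀ {X Y : ObjectProperty.FullSubcategory (Pmax M)} (f : X ⟶ Y),
      IsIso ((ObjectProperty.ι (Pmax M) ⋙ T).map f) ↔ IsIso f) ∧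
    (T.Faithful → (ObjectProperty.ι (Pmax M) ⋙ T).Faithful) ∧
    (T.Full → (ObjectProperty.ι (Pmax M) ⋙ T).Full) ∧
    (T.EssSurj → (ObjectProperty.ι (Pmax M) ⋙ T).EssSurj) := by
  refine ⟨fun {X Y} f => ⟨fun hf => ?_, fun _ => inferInstance⟩,
    fun _ => Functor.Faithful.comp _ _, fun _ => Functor.Full.comp _ _,
    fun _ => ⟨fun a => ?_⟩⟩
  · have : IsIso (T.map f.hom) := hf
    have : IsIso ((ObjectProperty.ι (Pmax M)).map f) :=
      isIso_of_isIso_map hAx0 X.property Y.property f.hom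
    exact isIso_of_reflects_iso f (ObjectProperty.ι (Pmax M))
  · exact ⟨⟨M.F.obj (T.objPreimage a), pmax_F_obj _⟩,
      ⟨eqToIso (M.fiber_eq _) ≪≫ T.objObjPreimageIso a⟩⟩

/-- under (Ax0), (Ax2), (Ax3), the restriction `T_max` of `T` to the full
subcategory of maximal objects is conservative; moreover if `T` is faithful
(resp. full, resp. essentially surjective) then so is `T_max`. -/
theorem tmax_conservative_and_inherits (T : C ⥤ A) (hAx0 : Ax0 T)
    [HasPushouts C] [HasPushouts A] [PreservesColimitsOfShape WalkingSpan T]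
    (M : MaxData T) :
    (∀ {X Y : ObjectProperty.FullSubcategory (Pmax M)} (f : X ⟶ Y),
      IsIso ((ObjectProperty.ι (Pmax M) ⋙ T).map f) ↔ IsIso f) ∧
    (T.Faithful → (ObjectProperty.ι (Pmax M) ⋙ T).Faithful) ∧
    (T.Full → (ObjectProperty.ι (Pmax M) ⋙ T).Full) ∧
    (T.EssSurj → (ObjectProperty.ι (Pmax M) ⋙ T).EssSurj) :=
  tmax_conservative_and_inherits_general T hAx0 M
end

section
/- Suppose T : C → A satisfies (Ax0), (Ax2), (Ax3) and (Ax5): C is additive, A is abelian, and T is additive. Then the functor Max : C → C is additive; in particular Max(C ⊕ C') is naturally isomorphic to Max(C) ⊕ Max(C'). -/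
open CategoryTheory Limits

universe v₁ v₂ u₁ u₂

variable {C : Type u₁} [Category.{v₁} C] {A : Type u₂} [Category.{v₂} A]

attribute [local instance] hasBinaryBiproducts_of_finite_biproducts

/-!
By uniqueness of morphisms into the terminal object of a fiber, `ι` at `Max X` is an
isomorphism and `Max (ι_X) = ι_{Max X}`; so `Max` is an idempotent reflection. Consequently
precomposition with `ι_X` is injective on morphisms `Max X ⟶ Max Y`. Since precomposition is
additive and `ι_X ≫ Max f = f ≫ ι_Y` by naturality, both `Max (f + g)` and `Max f + Max g`
restrict along `ι_X` to `(f + g) ≫ ι_Y`, hence coincide.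
-/

namespace MaxData

variable {T : C ⥤ A} (M : MaxData T)

theorem hom_ext_of_map_eq {X Y : C} (h : T.obj Y = T.obj X) {g₁ g₂ : Y ⟶ M.F.obj X}
    (h₁ : T.map g₁ = eqToHom (h.trans (M.fiber_eq X).symm))
    (h₂ : T.map g₂ = eqToHom (h.trans (M.fiber_eq X).symm)) : g₁ = g₂ :=
  (M.terminal X Y h).unique h₁ h₂

instance isIso_ι_app_obj (X : C) : IsIso (M.ι.app (M.F.obj X)) := by
  obtain ⟨s, hs, -⟩ :=
    M.terminal X (M.F.obj (M.F.obj X)) ((M.fiber_eq (M.F.obj X)).trans (M.fiber_eq X))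
  refine ⟨s, ?_, ?_⟩
  · exact M.hom_ext_of_map_eq (M.fiber_eq X) (by simp [M.ι_eq, hs]) (by simp)
  · exact M.hom_ext_of_map_eq (M.fiber_eq (M.F.obj X)) (by simp [M.ι_eq, hs]) (by simp)

theorem map_ι_app (X : C) : M.F.map (M.ι.app X) = M.ι.app (M.F.obj X) := by
  refine M.hom_ext_of_map_eq rfl ?_ (M.ι_eq _)
  have hnat := congrArg T.map (M.ι.naturality (M.ι.app X))
  simp only [Functor.id_map, Functor.map_comp, M.ι_eq] at hnat
  rw [← cancel_epi (eqToHom (M.fiber_eq X).symm), ← hnat]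

theorem hom_ext_of_ι_app_comp {X Y : C} {d₁ d₂ : M.F.obj X ⟶ M.F.obj Y}
    (h : M.ι.app X ≫ d₁ = M.ι.app X ≫ d₂) : d₁ = d₂ := by
  have hF : M.ι.app (M.F.obj X) ≫ M.F.map d₁ = M.ι.app (M.F.obj X) ≫ M.F.map d₂ := by
    simpa only [Functor.map_comp, M.map_ι_app] using congrArg M.F.map h
  have hnat (d : M.F.obj X ⟶ M.F.obj Y) :
      M.ι.app (M.F.obj X) ≫ M.F.map d = d ≫ M.ι.app (M.F.obj Y) :=
    (M.ι.naturality d).symm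
  rw [hnat, hnat] at hF
  exact (cancel_mono _).mp hF

instance additive [Preadditive C] : M.F.Additive where
  map_add {X Y f g} := M.hom_ext_of_ι_app_comp <| by
    have hnat {f : X ⟶ Y} : M.ι.app X ≫ M.F.map f = f ≫ M.ι.app Y := (M.ι.naturality f).symm
    rw [Preadditive.comp_add, hnat, hnat, hnat, Preadditive.add_comp]

end MaxData

theorem max_additive_general (T : C ⥤ A)
    [Preadditive C] [HasFiniteBiproducts C]
    (M : MaxData T) :
    M.F.Additive ∧
    (∀ X Y : C, Nonempty (M.F.obj (biprod X Y) ≅ biprod (M.F.obj X) (M.F.obj Y))) := by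
  have : PreservesBinaryBiproducts M.F := preservesBinaryBiproducts_of_preservesBiproducts M.F
  exact ⟨inferInstance, fun X Y => ⟨M.F.mapBiprod X Y⟩⟩

/-- under (Ax0), (Ax2), (Ax3) and (Ax5) (`C` additive, `A` abelian, `T`
additive), the functor `Max : C ⥤ C` is additive; in particular
`Max(C ⊕ C') ≅ Max(C) ⊕ Max(C')`. -/
theorem max_additive (T : C ⥤ A) (hAx0 : Ax0 T)
    [Preadditive C] [HasFiniteBiproducts C] [Abelian A] [T.Additive]
    [HasPushouts C] [HasPushouts A] [PreservesColimitsOfShape WalkingSpan T]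
    (M : MaxData T) :
    M.F.Additive ∧
    (∀ X Y : C, Nonempty (M.F.obj (biprod X Y) ≅ biprod (M.F.obj X) (M.F.obj Y))) :=
  max_additive_general T M
end
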